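/- Let Ω ⊂ ℝⁿ be a bounded domain, q ≥ 1, 0 < θ̄ < n, 0 < τ < θ̄, and let f : ℝⁿ → ℝ be measurable, vanishing outside Ω, with finite Morrey norm ‖f‖_{L^{q,θ̄}(Ω)}. Fix x₀ ∈ Ω and 0 < r ≤ diam(Ω), and set ω(x) = min{ |x−x₀|^{−n+θ̄−τ}, r^{−n+θ̄−τ} }. Then ( ∫_{ℝⁿ} |f(x)|^q ω(x) dx )^{1/q} ≤ 2 · max{ 1, 2^{(n+τ−θ̄)/q} / (2^{τ/q} − 1) } · r^{−τ/q} · ‖f‖_{L^{q,θ̄}(Ω)}. -/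

import Mathlib

/-!
Split space into the ball `B_r(x₀)` and the dyadic annuli `B_{2^{j+1} r} \ B_{2^j r}`. On the
`j`-th annulus the weight is at most `(2^j r)^{-n+θ-τ}`, while the Morrey norm bounds
`∫_{B_R} |f|^q` by `R^{n-θ} ‖f‖^q` for every `R`. So the annulus contributes at most
`2^{n-θ} 2^{-τ j} r^{-τ} ‖f‖^q`, and the geometric series gives
`∫ |f|^q ω ≤ (1 + 2^{n+τ-θ} / (2^τ - 1)) r^{-τ} ‖f‖^q`. Finally
`(2^{τ/q} - 1)^q ≤ 2^τ - 1` (superadditivity of `t ↦ t^q`) bounds this constant by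
`(2 max {1, 2^{(n+τ-θ)/q} / (2^{τ/q} - 1)})^q`.
-/

open Set MeasureTheory

variable {n : ℕ}

/-- The set of quantities whose supremum defines the Morrey norm `‖f‖_{L^{q,θ}(Ω)}`. -/
def morreySet (Ω : Set (EuclideanSpace ℝ (Fin n))) (q θ : ℝ)
    (f : EuclideanSpace ℝ (Fin n) → ℝ) : Set ℝ :=
  {y | ∃ x₀ ∈ Ω, ∃ r : ℝ, 0 < r ∧ r ≤ Metric.diam Ω ∧
    y = (r ^ (-((n : ℝ) - θ)) * ∫ x in Ω ∩ Metric.ball x₀ r, |f x| ^ q) ^ (1 / q)}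

/-- The Morrey norm `‖f‖_{L^{q,θ}(Ω)}`. -/
noncomputable def morreyNorm (Ω : Set (EuclideanSpace ℝ (Fin n))) (q θ : ℝ)
    (f : EuclideanSpace ℝ (Fin n) → ℝ) : ℝ :=
  sSup (morreySet Ω q θ f)

open Metric

noncomputable def truncatedPowerWeight {E : Type*} [NormedAddCommGroup E] (x₀ : E) (r α : ℝ)
    (x : E) : ℝ :=
  min (‖x - x₀‖ ^ α) (r ^ α)

section Weight

variable {E : Type*} [NormedAddCommGroup E] {x₀ x : E} {r α : ℝ}

lemma truncatedPowerWeight_nonneg (hr : 0 ≤ r) : 0 ≤ truncatedPowerWeight x₀ r α x :=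
  le_min (Real.rpow_nonneg (norm_nonneg _) _) (Real.rpow_nonneg hr _)

lemma truncatedPowerWeight_le_rpow {ρ : ℝ} (hα : α ≤ 0) (hρ : 0 < ρ) (hx : ρ ≤ ‖x - x₀‖) :
    truncatedPowerWeight x₀ r α x ≤ ρ ^ α :=
  (min_le_left _ _).trans (Real.rpow_le_rpow_of_nonpos hρ hx hα)

lemma rpow_le_truncatedPowerWeight {R : ℝ} (hα : α ≤ 0) (hr : 0 < r) (hrR : r ≤ R)
    (hx : x ≠ x₀) (hxR : ‖x - x₀‖ ≤ R) : R ^ α ≤ truncatedPowerWeight x₀ r α x :=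
  le_min (Real.rpow_le_rpow_of_nonpos (norm_pos_iff.2 (sub_ne_zero.2 hx)) hxR hα)
    (Real.rpow_le_rpow_of_nonpos hr hrR hα)

end Weight

section DyadicAnnulus

variable {E : Type*} [PseudoMetricSpace E] {x₀ : E} {r : ℝ}

def dyadicAnnulus (x₀ : E) (r : ℝ) : ℕ → Set E :=
  disjointed fun j => ball x₀ (2 ^ j * r)

lemma monotone_ball_two_pow_mul (hr : 0 ≤ r) : Monotone fun j : ℕ => ball x₀ (2 ^ j * r) :=
  fun _ _ hij =>
    ball_subset_ball <| mul_le_mul_of_nonneg_right (pow_le_pow_right₀ one_le_two hij) hr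

@[simp]
lemma dyadicAnnulus_zero : dyadicAnnulus x₀ r 0 = ball x₀ r := by
  simp [dyadicAnnulus, disjointed_zero]

lemma dyadicAnnulus_succ (hr : 0 ≤ r) (j : ℕ) :
    dyadicAnnulus x₀ r (j + 1) = ball x₀ (2 ^ (j + 1) * r) \ ball x₀ (2 ^ j * r) :=
  (monotone_ball_two_pow_mul hr).disjointed_succ (not_isMax j)

lemma iUnion_dyadicAnnulus (hr : 0 < r) : ⋃ j, dyadicAnnulus x₀ r j = univ := by
  refine (iUnion_disjointed).trans (eq_univ_of_forall fun x => mem_iUnion.2 ?_)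
  obtain ⟨j, hj⟩ := pow_unbounded_of_one_lt (dist x x₀ / r) one_lt_two
  exact ⟨j, mem_ball.2 ((div_lt_iff₀ hr).1 hj)⟩

variable [MeasurableSpace E] [OpensMeasurableSpace E] {μ : Measure E}

lemma measurableSet_dyadicAnnulus (j : ℕ) : MeasurableSet (dyadicAnnulus x₀ r j) :=
  MeasurableSet.disjointed (fun _ => measurableSet_ball) j

lemma hasSum_integral_dyadicAnnulus {g : E → ℝ} (hr : 0 < r) (hg : Integrable g μ) :
    HasSum (fun j => ∫ x in dyadicAnnulus x₀ r j, g x ∂μ) (∫ x, g x ∂μ) := by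
  have h := hasSum_integral_iUnion (μ := μ) (f := g) (s := dyadicAnnulus x₀ r)
    measurableSet_dyadicAnnulus (disjoint_disjointed _)
    (by rw [iUnion_dyadicAnnulus hr]; exact hg.integrableOn)
  rwa [iUnion_dyadicAnnulus hr, Measure.restrict_univ] at h

end DyadicAnnulus

lemma setIntegral_mul_le_mul_setIntegral {X : Type*} [MeasurableSpace X] {μ : Measure X}
    {φ ω : X → ℝ} {s t : Set X} {c : ℝ} (hs : MeasurableSet s) (hst : s ⊆ t)
    (hφ : ∀ x, 0 ≤ φ x) (hc : 0 ≤ c) (hω : ∀ x ∈ s, ω x ≤ c)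
    (hφω : IntegrableOn (fun x => φ x * ω x) s μ) (hφt : IntegrableOn φ t μ) :
    ∫ x in s, φ x * ω x ∂μ ≤ c * ∫ x in t, φ x ∂μ := calc
  ∫ x in s, φ x * ω x ∂μ ≤ ∫ x in s, c * φ x ∂μ :=
    setIntegral_mono_on hφω ((hφt.mono_set hst).const_mul c) hs fun x hx => by
      rw [mul_comm c]; exact mul_le_mul_of_nonneg_left (hω x hx) (hφ x)
  _ = c * ∫ x in s, φ x ∂μ := integral_const_mul c _
  _ ≤ c * ∫ x in t, φ x ∂μ := mul_le_mul_of_nonneg_left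
    (setIntegral_mono_set hφt (ae_of_all _ hφ) (ae_of_all _ hst)) hc

lemma one_add_rpow_div_le_two_mul_max_rpow {q A B : ℝ} (hq : 1 ≤ q) (hA : 0 ≤ A) (hB : 1 < B) :
    1 + A ^ q / (B ^ q - 1) ≤ (2 * max 1 (A / (B - 1))) ^ q := by
  have hq0 : 0 < q := one_pos.trans_le hq
  set m := max 1 (A / (B - 1))
  have hm : 1 ≤ m ^ q := Real.one_le_rpow (le_max_left _ _) hq0.le
  have hden : (B - 1) ^ q ≤ B ^ q - 1 := by
    have := Real.add_rpow_le_rpow_add (sub_nonneg.2 hB.le) zero_le_one hq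
    rw [Real.one_rpow, sub_add_cancel] at this
    linarith
  have hfrac : A ^ q / (B ^ q - 1) ≤ m ^ q := calc
    A ^ q / (B ^ q - 1) ≤ A ^ q / (B - 1) ^ q :=
      div_le_div_of_nonneg_left (by positivity) (by have := sub_pos.2 hB; positivity) hden
    _ = (A / (B - 1)) ^ q := (Real.div_rpow hA (sub_nonneg.2 hB.le) q).symm
    _ ≤ m ^ q := Real.rpow_le_rpow (div_nonneg hA (sub_nonneg.2 hB.le)) (le_max_right _ _) hq0.le
  calc 1 + A ^ q / (B ^ q - 1) ≤ 2 * m ^ q := by linarith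
    _ ≤ 2 ^ q * m ^ q := mul_le_mul_of_nonneg_right
      (by simpa using Real.rpow_le_rpow_of_exponent_le one_le_two hq) (by linarith)
    _ = (2 * m) ^ q := (Real.mul_rpow zero_le_two (zero_le_one.trans (le_max_left _ _))).symm

lemma one_add_two_rpow_div_le {q τ : ℝ} (hq : 1 ≤ q) (hτ : 0 < τ) (s : ℝ) :
    1 + 2 ^ s / (2 ^ τ - 1) ≤ (2 * max 1 ((2 : ℝ) ^ (s / q) / (2 ^ (τ / q) - 1))) ^ q := by
  have hq0 : 0 < q := one_pos.trans_le hq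
  have h := one_add_rpow_div_le_two_mul_max_rpow hq (Real.rpow_nonneg zero_le_two (s / q))
    (Real.one_lt_rpow one_lt_two (div_pos hτ hq0))
  rwa [← Real.rpow_mul zero_le_two, ← Real.rpow_mul zero_le_two, div_mul_cancel₀ _ hq0.ne',
    div_mul_cancel₀ _ hq0.ne'] at h

section WeightedBound

variable {E : Type*} [NormedAddCommGroup E] [MeasurableSpace E] [OpensMeasurableSpace E]
  {μ : Measure E} {φ : E → ℝ} {x₀ : E} {r α : ℝ}

lemma rpow_two_pow_mul (hr : 0 < r) (j : ℕ) (α : ℝ) :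
    ((2 : ℝ) ^ j * r) ^ α = (2 ^ α) ^ j * r ^ α := by
  rw [Real.mul_rpow (by positivity) hr.le, ← Real.rpow_natCast, ← Real.rpow_natCast,
    ← Real.rpow_mul zero_le_two, ← Real.rpow_mul zero_le_two, mul_comm (j : ℝ)]

lemma rpow_two_pow_mul_mul_rpow_two_pow_succ_mul (hr : 0 < r) (j : ℕ) (α β : ℝ) :
    ((2 : ℝ) ^ j * r) ^ α * (2 ^ (j + 1) * r) ^ β = 2 ^ β * (2 ^ (α + β)) ^ j * r ^ (α + β) := by
  rw [rpow_two_pow_mul hr, rpow_two_pow_mul hr, Real.rpow_add two_pos, Real.rpow_add hr, mul_pow]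
  ring

lemma two_rpow_div_one_sub_two_rpow_neg (β τ : ℝ) :
    (2 : ℝ) ^ β / (1 - 2 ^ (-τ)) = 2 ^ (β + τ) / (2 ^ τ - 1) := by
  have : (0 : ℝ) < 2 ^ τ := Real.rpow_pos_of_pos two_pos τ
  rw [Real.rpow_neg zero_le_two, Real.rpow_add two_pos]
  field_simp

lemma integrableOn_ball_of_integrable_mul_truncatedPowerWeight [NullSingletonClass μ] {R : ℝ}
    (hr : 0 < r) (hrR : r ≤ R) (hα : α ≤ 0) (hφ : ∀ x, 0 ≤ φ x)
    (hφm : AEStronglyMeasurable φ μ)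
    (hint : Integrable (fun x => φ x * truncatedPowerWeight x₀ r α x) μ) :
    IntegrableOn φ (ball x₀ R) μ := by
  have hR : 0 < R ^ α := Real.rpow_pos_of_pos (hr.trans_le hrR) α
  refine Integrable.mono' (hint.integrableOn.const_mul (R ^ α)⁻¹) hφm.restrict ?_
  -- The weight vanishes at `x₀` (as `0 ^ α = 0` for `α ≠ 0`), so the centre is discarded.
  have hne : ∀ᵐ x ∂μ, x ∉ ({x₀} : Set E) :=
    measure_eq_zero_iff_ae_notMem.1 (measure_singleton x₀)
  filter_upwards [ae_restrict_mem measurableSet_ball, ae_restrict_of_ae hne] with x hxR hx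
  rw [Real.norm_of_nonneg (hφ x), le_inv_mul_iff₀ hR, mul_comm]
  exact mul_le_mul_of_nonneg_left (rpow_le_truncatedPowerWeight hα hr hrR hx
    (by simpa [dist_eq_norm] using (mem_ball.1 hxR).le)) (hφ x)

theorem integral_mul_truncatedPowerWeight_le [NullSingletonClass μ] {β τ K : ℝ}
    (hr : 0 < r) (hα : α ≤ 0) (hαβ : α + β = -τ) (hτ : 0 < τ)
    (hφ : ∀ x, 0 ≤ φ x) (hφm : AEStronglyMeasurable φ μ)
    (hint : Integrable (fun x => φ x * truncatedPowerWeight x₀ r α x) μ)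
    (hgrowth : ∀ R, r ≤ R → ∫ x in ball x₀ R, φ x ∂μ ≤ K * R ^ β) :
    ∫ x, φ x * truncatedPowerWeight x₀ r α x ∂μ ≤
      (1 + 2 ^ (β + τ) / (2 ^ τ - 1)) * K * r ^ (-τ) := by
  set w := truncatedPowerWeight x₀ r α
  set I := fun j => ∫ x in dyadicAnnulus x₀ r j, φ x * w x ∂μ
  have hpiece {s : Set E} {c R : ℝ} (hs : MeasurableSet s) (hsR : s ⊆ ball x₀ R) (hrR : r ≤ R)
      (hc : 0 ≤ c) (hw : ∀ x ∈ s, w x ≤ c) : ∫ x in s, φ x * w x ∂μ ≤ c * (K * R ^ β) :=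
    (setIntegral_mul_le_mul_setIntegral hs hsR hφ hc hw hint.integrableOn
      (integrableOn_ball_of_integrable_mul_truncatedPowerWeight hr hrR hα hφ hφm hint)).trans
      (mul_le_mul_of_nonneg_left (hgrowth R hrR) hc)
  have hzero : I 0 ≤ K * r ^ (-τ) := by
    simp only [I, dyadicAnnulus_zero]
    refine (hpiece measurableSet_ball subset_rfl le_rfl
      (Real.rpow_nonneg hr.le α) fun x _ => min_le_right _ _).trans_eq ?_
    rw [← hαβ, Real.rpow_add hr]
    ring
  have hsucc (j : ℕ) : I (j + 1) ≤ 2 ^ β * (2 ^ (-τ)) ^ j * (K * r ^ (-τ)) := by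
    have h2j : 0 < (2 : ℝ) ^ j * r := by positivity
    refine (hpiece (R := 2 ^ (j + 1) * r) (measurableSet_dyadicAnnulus _) ?_ ?_
      (Real.rpow_nonneg h2j.le α) fun x hx => truncatedPowerWeight_le_rpow hα h2j ?_).trans_eq ?_
    · rw [dyadicAnnulus_succ hr.le]; exact sdiff_subset
    · exact le_mul_of_one_le_left hr.le (one_le_pow₀ one_le_two)
    · rw [dyadicAnnulus_succ hr.le] at hx
      simpa [dist_eq_norm] using hx.2
    · rw [mul_left_comm, rpow_two_pow_mul_mul_rpow_two_pow_succ_mul hr, hαβ]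
      ring
  have hρ : (2 : ℝ) ^ (-τ) < 1 := Real.rpow_lt_one_of_one_lt_of_neg one_lt_two (neg_neg_of_pos hτ)
  have htail : HasSum (fun j => I (j + 1)) (∫ x, φ x * w x ∂μ - I 0) := by
    simpa only [Finset.sum_range_one] using
      (hasSum_nat_add_iff' 1).2 (hasSum_integral_dyadicAnnulus (x₀ := x₀) hr hint)
  have hgeom := ((hasSum_geometric_of_lt_one (by positivity) hρ).mul_left (2 ^ β)).mul_right
    (K * r ^ (-τ))
  have htail_le := hasSum_le hsucc htail hgeom
  rw [← mul_assoc, ← div_eq_mul_inv, two_rpow_div_one_sub_two_rpow_neg] at htail_le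
  linarith

end WeightedBound

section Morrey

variable {Ω : Set (EuclideanSpace ℝ (Fin n))} {q θ : ℝ} {f : EuclideanSpace ℝ (Fin n) → ℝ}
  {x₀ : EuclideanSpace ℝ (Fin n)} {R : ℝ}

lemma le_morreyNorm (hbdd : BddAbove (morreySet Ω q θ f)) (hx₀ : x₀ ∈ Ω) (hR : 0 < R)
    (hRd : R ≤ diam Ω) :
    (R ^ (-((n : ℝ) - θ)) * ∫ x in Ω ∩ ball x₀ R, |f x| ^ q) ^ (1 / q) ≤ morreyNorm Ω q θ f :=
  le_csSup hbdd ⟨x₀, hx₀, R, hR, hRd, rfl⟩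

lemma morreyNorm_nonneg (hbdd : BddAbove (morreySet Ω q θ f)) (hx₀ : x₀ ∈ Ω) (hR : 0 < R)
    (hRd : R ≤ diam Ω) : 0 ≤ morreyNorm Ω q θ f :=
  (Real.rpow_nonneg (mul_nonneg (Real.rpow_nonneg hR.le _)
    (integral_nonneg fun _ => Real.rpow_nonneg (abs_nonneg _) _)) _).trans
    (le_morreyNorm hbdd hx₀ hR hRd)

lemma setIntegral_inter_ball_le_morreyNorm (hq : 0 < q) (hbdd : BddAbove (morreySet Ω q θ f))
    (hx₀ : x₀ ∈ Ω) (hR : 0 < R) (hRd : R ≤ diam Ω) :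
    ∫ x in Ω ∩ ball x₀ R, |f x| ^ q ≤ morreyNorm Ω q θ f ^ q * R ^ ((n : ℝ) - θ) := by
  have h := le_morreyNorm hbdd hx₀ hR hRd
  rwa [one_div, Real.rpow_inv_le_iff_of_pos (mul_nonneg (Real.rpow_nonneg hR.le _)
    (integral_nonneg fun _ => Real.rpow_nonneg (abs_nonneg _) _))
    (morreyNorm_nonneg hbdd hx₀ hR hRd) hq, Real.rpow_neg hR.le,
    inv_mul_le_iff₀ (Real.rpow_pos_of_pos hR _), mul_comm] at h

/-- For `R > diam Ω` the Morrey quantity is unavailable, but `f` vanishes off `Ω`, and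
`Ω ∩ ball x₀ R` differs from `Ω ∩ ball x₀ (diam Ω)` only inside a null sphere. -/
lemma setIntegral_ball_le_morreyNorm (hq : 0 < q) (hθn : θ ≤ n) (hΩb : Bornology.IsBounded Ω)
    (hf0 : ∀ x ∉ Ω, f x = 0) (hbdd : BddAbove (morreySet Ω q θ f)) (hx₀ : x₀ ∈ Ω)
    (hd : 0 < diam Ω) (hR : 0 < R) :
    ∫ x in ball x₀ R, |f x| ^ q ≤ morreyNorm Ω q θ f ^ q * R ^ ((n : ℝ) - θ) := by
  set R' := min R (diam Ω)
  have hR' : 0 < R' := lt_min hR hd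
  have hsphere : ∀ᵐ x, x ∉ sphere x₀ (diam Ω) :=
    measure_eq_zero_iff_ae_notMem.1 (Measure.addHaar_sphere_of_ne_zero volume x₀ hd.ne')
  have heq : ∫ x in ball x₀ R, |f x| ^ q = ∫ x in Ω ∩ ball x₀ R', |f x| ^ q := by
    refine setIntegral_eq_of_subset_of_ae_sdiff_eq_zero measurableSet_ball.nullMeasurableSet
      (fun x hx => ball_subset_ball (min_le_left _ _) hx.2) ?_
    filter_upwards [hsphere] with x hxs ⟨hxR, hxR'⟩
    by_cases hxΩ : x ∈ Ω
    · have hxd : dist x x₀ < diam Ω :=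
        (dist_le_diam_of_mem hΩb hxΩ hx₀).lt_of_ne (by simpa [dist_eq_norm] using hxs)
      exact absurd ⟨hxΩ, lt_min (mem_ball.1 hxR) hxd⟩ hxR'
    · rw [hf0 x hxΩ, abs_zero, Real.zero_rpow hq.ne']
  rw [heq]
  refine (setIntegral_inter_ball_le_morreyNorm hq hbdd hx₀ hR' (min_le_right _ _)).trans ?_
  exact mul_le_mul_of_nonneg_left (Real.rpow_le_rpow hR'.le (min_le_left _ _) (sub_nonneg.2 hθn))
    (Real.rpow_nonneg (morreyNorm_nonneg hbdd hx₀ hR' (min_le_right _ _)) q)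

end Morrey

theorem morrey_weighted_estimate_general (hn : 1 ≤ n)
    (Ω : Set (EuclideanSpace ℝ (Fin n)))
    (hΩb : Bornology.IsBounded Ω)
    (q θ τ : ℝ) (hq : 1 ≤ q) (hθn : θ < n) (hτ : 0 < τ)
    (f : EuclideanSpace ℝ (Fin n) → ℝ) (hf : Measurable f)
    (hf0 : ∀ x ∉ Ω, f x = 0) (hbdd : BddAbove (morreySet Ω q θ f))
    (x₀ : EuclideanSpace ℝ (Fin n)) (hx₀ : x₀ ∈ Ω)
    (r : ℝ) (hr : 0 < r) (hrd : r ≤ Metric.diam Ω) :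
    (∫ x, |f x| ^ q * min (‖x - x₀‖ ^ (-(n : ℝ) + θ - τ)) (r ^ (-(n : ℝ) + θ - τ))) ^ (1 / q)
      ≤ 2 * max 1 ((2 : ℝ) ^ (((n : ℝ) + τ - θ) / q) / ((2 : ℝ) ^ (τ / q) - 1)) *
        r ^ (-τ / q) * morreyNorm Ω q θ f := by
  show (∫ x, |f x| ^ q * truncatedPowerWeight x₀ r (-(n : ℝ) + θ - τ) x) ^ (1 / q) ≤ _
  have hq0 : 0 < q := one_pos.trans_le hq
  have : NeZero n := ⟨by omega⟩
  set C := max 1 ((2 : ℝ) ^ (((n : ℝ) + τ - θ) / q) / ((2 : ℝ) ^ (τ / q) - 1))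
  set M := morreyNorm Ω q θ f
  have hM : 0 ≤ M := morreyNorm_nonneg hbdd hx₀ hr hrd
  rw [one_div, Real.rpow_inv_le_iff_of_pos (integral_nonneg fun x =>
    mul_nonneg (Real.rpow_nonneg (abs_nonneg _) _) (truncatedPowerWeight_nonneg hr.le))
    (by positivity) hq0]
  by_cases hint : Integrable fun x => |f x| ^ q * truncatedPowerWeight x₀ r (-(n : ℝ) + θ - τ) x
  swap
  · rw [integral_undef hint]; positivity
  calc _ ≤ (1 + 2 ^ ((n : ℝ) - θ + τ) / (2 ^ τ - 1)) * M ^ q * r ^ (-τ) :=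
        integral_mul_truncatedPowerWeight_le hr (by linarith) (by ring) hτ
          (fun x => Real.rpow_nonneg (abs_nonneg (f x)) q)
          (hf.abs.pow_const q).aestronglyMeasurable hint fun R hrR =>
            setIntegral_ball_le_morreyNorm hq0 hθn.le hΩb hf0 hbdd hx₀ (hr.trans_le hrd)
              (hr.trans_le hrR)
    _ ≤ (2 * C) ^ q * M ^ q * r ^ (-τ) := by
      rw [show (n : ℝ) - θ + τ = n + τ - θ by ring]
      gcongr
      exact one_add_two_rpow_div_le hq hτ _
    _ = (2 * C * r ^ (-τ / q) * M) ^ q := by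
      rw [Real.mul_rpow (by positivity) hM, Real.mul_rpow (x := 2 * C) (by positivity)
        (by positivity), ← Real.rpow_mul hr.le, div_mul_cancel₀ _ hq0.ne']
      ring

/-- Weighted bound: with `ω(x) = min{|x−x₀|^{−n+θ̄−τ}, r^{−n+θ̄−τ}}`,
`(∫_{ℝⁿ} |f|^q ω)^{1/q} ≤ 2 max{1, 2^{(n+τ−θ̄)/q}/(2^{τ/q}−1)} r^{−τ/q} ‖f‖_{L^{q,θ̄}(Ω)}`. -/
theorem morrey_weighted_estimate (hn : 1 ≤ n)
    (Ω : Set (EuclideanSpace ℝ (Fin n))) (hΩm : MeasurableSet Ω)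
    (hΩb : Bornology.IsBounded Ω) (hΩne : Ω.Nonempty)
    (q θ τ : ℝ) (hq : 1 ≤ q) (hθ : 0 < θ) (hθn : θ < n) (hτ : 0 < τ) (hτθ : τ < θ)
    (f : EuclideanSpace ℝ (Fin n) → ℝ) (hf : Measurable f)
    (hf0 : ∀ x ∉ Ω, f x = 0) (hbdd : BddAbove (morreySet Ω q θ f))
    (x₀ : EuclideanSpace ℝ (Fin n)) (hx₀ : x₀ ∈ Ω)
    (r : ℝ) (hr : 0 < r) (hrd : r ≤ Metric.diam Ω) :
    (∫ x, |f x| ^ q * min (‖x - x₀‖ ^ (-(n : ℝ) + θ - τ)) (r ^ (-(n : ℝ) + θ - τ))) ^ (1 / q)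
      ≤ 2 * max 1 ((2 : ℝ) ^ (((n : ℝ) + τ - θ) / q) / ((2 : ℝ) ^ (τ / q) - 1)) *
        r ^ (-τ / q) * morreyNorm Ω q θ f :=
  morrey_weighted_estimate_general hn Ω hΩb q θ τ hq hθn hτ f hf hf0 hbdd x₀ hx₀ r hr hrd
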